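/- Let φ ∈ C_0^∞(ℝ^n) be supported in a ball of radius ρ > 0 centered at the origin. Then for every ξ ∈ ℝ^n and every coordinate index j, one has 2π|ξ_j| ∫_{-∞}^0 |φ̂(tξ)| dt ≤ ρ^{-1} ‖φ‖_{L^1(ℝ^n)} + ρ ‖∂_j^2 φ‖_{L^1(ℝ^n)}. -/

import Mathlib

open MeasureTheory Real Set Filter Metric
open scoped ENNReal Topology

noncomputable section

/-- Partial derivative in the `j`-th coordinate direction. -/
def pd {n : ℕ} (j : Fin n) (g : (Fin n → ℝ) → ℝ) : (Fin n → ℝ) → ℝ :=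
  fun x => fderiv ℝ g x (Pi.single j 1)

/-- The Fourier transform `φ̂(ξ) = ∫ φ(x) e^{-2πi x·ξ} dx`. -/
def fourierT {n : ℕ} (φ : (Fin n → ℝ) → ℝ) (ξ : Fin n → ℝ) : ℂ :=
  ∫ x : Fin n → ℝ,
    Complex.exp (((-(2 * π) * ∑ i, x i * ξ i : ℝ) : ℂ) * Complex.I) * (φ x : ℂ)

namespace Stmt0Aux

open FourierTransform
open scoped RealInnerProductSpace

variable {n : ℕ}

abbrev V (n : ℕ) := EuclideanSpace ℝ (Fin n)

/-- complexification of a real function, viewed on Euclidean space -/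
def psiC {n : ℕ} (g : (Fin n → ℝ) → ℝ) : V n → ℂ := fun x => (g x : ℂ)

theorem fourierT_eq (φ : (Fin n → ℝ) → ℝ) (ξ : Fin n → ℝ) :
    fourierT φ ξ = 𝓕 (psiC φ) (WithLp.toLp 2 ξ : V n) := by
  rw [Real.fourier_eq', fourierT,
    ((EuclideanSpace.volume_preserving_symm_measurableEquiv_toLp (Fin n)).integral_comp
      (MeasurableEquiv.toLp 2 (Fin n → ℝ)).symm.measurableEmbedding _).symm]
  congr 1 with x
  rw [smul_eq_mul]
  congr 2
  have h1 : ⟪x, (WithLp.toLp 2 ξ : V n)⟫ = ∑ i, x i * ξ i := by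
    simp [PiLp.inner_apply, RCLike.inner_apply, mul_comm]
  have h2 : (MeasurableEquiv.toLp 2 (Fin n → ℝ)).symm x = x.ofLp := rfl
  rw [h2, h1]
  push_cast
  ring

theorem hasFDerivAt_psi (g : (Fin n → ℝ) → ℝ) (hg : Differentiable ℝ g) (x : V n) :
    HasFDerivAt (psiC g)
      ((Complex.ofRealCLM.comp (fderiv ℝ g x)).comp
        (PiLp.continuousLinearEquiv 2 ℝ (fun _ : Fin n => ℝ) : V n →L[ℝ] (Fin n → ℝ))) x :=
  (Complex.ofRealCLM.hasFDerivAt.comp _ ((hg x).hasFDerivAt.comp x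
    ((PiLp.continuousLinearEquiv 2 ℝ (fun _ : Fin n => ℝ)).hasFDerivAt)))

theorem pd_eq (j : Fin n) (g : (Fin n → ℝ) → ℝ) (hg : Differentiable ℝ g) (x : V n) :
    fderiv ℝ (psiC g) x (EuclideanSpace.single j 1) = (pd j g x : ℂ) := by
  rw [(hasFDerivAt_psi g hg x).fderiv]
  rfl

theorem key (g : V n → ℂ) (hg : Differentiable ℝ g) (hgi : Integrable g)
    (hg'i : Integrable (fderiv ℝ g)) (w u : V n) :
    𝓕 (fun x => fderiv ℝ g x u) w = ((2 * π * Complex.I * (⟪w, u⟫ : ℝ)) : ℂ) * 𝓕 g w := by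
  rw [← Real.fourier_continuousLinearMap_apply hg'i,
    Real.fourier_fderiv hgi hg hg'i]
  simp [VectorFourier.fourierSMulRight_apply, Complex.real_smul]
  erw [innerSL_apply_apply]
  ring

variable {g : (Fin n → ℝ) → ℝ}

theorem contDiff_psiC (hg : ContDiff ℝ (⊤ : ℕ∞) g) : ContDiff ℝ (⊤ : ℕ∞) (psiC g) :=
  Complex.ofRealCLM.contDiff.comp (hg.comp
    (PiLp.continuousLinearEquiv 2 ℝ (fun _ : Fin n => ℝ)).toContinuousLinearMap.contDiff)

theorem hcs_psiC (hK : HasCompactSupport g) : HasCompactSupport (psiC g) := by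
  have h1 : HasCompactSupport
      (g ∘ (PiLp.continuousLinearEquiv 2 ℝ (fun _ : Fin n => ℝ)).toHomeomorph) :=
    hK.comp_homeomorph _
  exact h1.comp_left (g := fun r : ℝ => (r : ℂ)) Complex.ofReal_zero

theorem integrable_psiC (hg : ContDiff ℝ (⊤ : ℕ∞) g) (hK : HasCompactSupport g) :
    Integrable (psiC g) :=
  (contDiff_psiC hg).continuous.integrable_of_hasCompactSupport (hcs_psiC hK)

theorem integrable_fderiv_psiC (hg : ContDiff ℝ (⊤ : ℕ∞) g) (hK : HasCompactSupport g) :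
    Integrable (fderiv ℝ (psiC g)) :=
  ((contDiff_psiC hg).fderiv_right (m := (⊤ : ℕ∞)) (by simp)).continuous.integrable_of_hasCompactSupport
    ((hcs_psiC hK).fderiv ℝ)

theorem contDiff_pd (j : Fin n) (hg : ContDiff ℝ (⊤ : ℕ∞) g) : ContDiff ℝ (⊤ : ℕ∞) (pd j g) :=
  (hg.fderiv_right (m := (⊤ : ℕ∞)) (by simp)).clm_apply contDiff_const

theorem hcs_pd (j : Fin n) (hK : HasCompactSupport g) : HasCompactSupport (pd j g) :=
  (hK.fderiv ℝ).comp_left (g := fun f : ((Fin n → ℝ) →L[ℝ] ℝ) => f (Pi.single j 1)) rfl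

theorem four_deriv (j : Fin n) (hg : ContDiff ℝ (⊤ : ℕ∞) g) (hK : HasCompactSupport g) (w : V n) :
    𝓕 (psiC (pd j g)) w = ((2 * π * Complex.I * ((w j : ℝ) : ℂ)) : ℂ) * 𝓕 (psiC g) w := by
  have hdiff : Differentiable ℝ (psiC g) := (contDiff_psiC hg).differentiable (by simp)
  have h1 : (fun x : V n => fderiv ℝ (psiC g) x (EuclideanSpace.single j (1:ℝ)))
      = psiC (pd j g) :=
    funext fun x => pd_eq j g (hg.differentiable (by simp)) x
  rw [← h1, key (psiC g) hdiff (integrable_psiC hg hK) (integrable_fderiv_psiC hg hK) w _]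
  congr 3
  simp [EuclideanSpace.inner_single_left, EuclideanSpace.inner_single_right]

theorem nnorm_four_le (hg : ContDiff ℝ (⊤ : ℕ∞) g) (hK : HasCompactSupport g) (w : V n) :
    (‖𝓕 (psiC g) w‖₊ : ℝ≥0∞) ≤ ∫⁻ x : Fin n → ℝ, ‖g x‖₊ := by
  have hInt := integrable_psiC hg hK
  have h1 : ‖𝓕 (psiC g) w‖ ≤ ∫ x : V n, ‖psiC g x‖ :=
    VectorFourier.norm_fourierIntegral_le_integral_norm _ _ _ _ _
  have h2 : ENNReal.ofReal (∫ x : V n, ‖psiC g x‖) = ∫⁻ x : V n, ‖psiC g x‖₊ :=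
    ofReal_integral_norm_eq_lintegral_enorm hInt
  have h3 : ∫⁻ x : V n, (‖psiC g x‖₊ : ℝ≥0∞) = ∫⁻ x : Fin n → ℝ, ‖g x‖₊ := by
    have h4 := (EuclideanSpace.volume_preserving_symm_measurableEquiv_toLp (Fin n)).lintegral_comp
      (f := fun y : Fin n → ℝ => (‖g y‖₊ : ℝ≥0∞))
      (hg.continuous.measurable.nnnorm.coe_nnreal_ennreal)
    rw [← h4]
    congr 1
    funext x
    simp [psiC]
  calc (‖𝓕 (psiC g) w‖₊ : ℝ≥0∞) = ENNReal.ofReal ‖𝓕 (psiC g) w‖ :=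
        (ofReal_norm _).symm
    _ ≤ ENNReal.ofReal (∫ x : V n, ‖psiC g x‖) := ENNReal.ofReal_le_ofReal h1
    _ = _ := by rw [h2, h3]

theorem norm_four_deriv2 (j : Fin n) (hg : ContDiff ℝ (⊤ : ℕ∞) g) (hK : HasCompactSupport g) (w : V n) :
    ENNReal.ofReal ((2 * π * |w j|) ^ 2) * ‖𝓕 (psiC g) w‖₊
      = (‖𝓕 (psiC (pd j (pd j g))) w‖₊ : ℝ≥0∞) := by
  rw [four_deriv j (contDiff_pd j hg) (hcs_pd j hK) w, four_deriv j hg hK w]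
  have hn : ∀ z : ℂ, (‖z‖₊ : ℝ≥0∞) = ENNReal.ofReal ‖z‖ := fun z => (ofReal_norm z).symm
  rw [hn, hn,
    ← ENNReal.ofReal_mul (by positivity)]
  congr 1
  simp only [norm_mul, Complex.norm_I, Complex.norm_real, Complex.norm_ofNat,
    Real.norm_eq_abs, abs_of_pos Real.pi_pos]
  ring

end Stmt0Aux

open Stmt0Aux

/-- for `φ ∈ C_0^∞(ℝ^n)` supported in a ball of radius `ρ` centered at the
origin, `2π|ξ_j| ∫_{-∞}^0 |φ̂(tξ)| dt ≤ ρ⁻¹‖φ‖_{L¹} + ρ‖∂_j²φ‖_{L¹}`. -/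
theorem stmt0 {n : ℕ} (ρ : ℝ) (hρ : 0 < ρ) (φ : (Fin n → ℝ) → ℝ)
    (hφ : ContDiff ℝ (⊤ : ℕ∞) φ) (hsupp : tsupport φ ⊆ Metric.ball 0 ρ)
    (ξ : Fin n → ℝ) (j : Fin n) :
    ENNReal.ofReal (2 * π * |ξ j|) * ∫⁻ t in Iio (0 : ℝ), (‖fourierT φ (t • ξ)‖₊ : ℝ≥0∞)
      ≤ ENNReal.ofReal ρ⁻¹ * (∫⁻ x, (‖φ x‖₊ : ℝ≥0∞)) +
        ENNReal.ofReal ρ * ∫⁻ x, (‖pd j (pd j φ) x‖₊ : ℝ≥0∞) := by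
  have hK : HasCompactSupport φ :=
    (isCompact_closedBall (0 : Fin n → ℝ) ρ).of_isClosed_subset (isClosed_tsupport φ)
      (hsupp.trans ball_subset_closedBall)
  by_cases hξ : ξ j = 0
  · rw [hξ]; simp
  · set a : ℝ := 2 * π * |ξ j| with ha_def
    have ha : 0 < a := by
      have := abs_pos.mpr hξ
      positivity
    set T : ℝ := (ρ * a)⁻¹ with hT_def
    have hT : 0 < T := inv_pos.2 (mul_pos hρ ha)
    set C1 : ℝ≥0∞ := ∫⁻ x, (‖φ x‖₊ : ℝ≥0∞) with hC1_def
    set C2 : ℝ≥0∞ := ∫⁻ x, (‖pd j (pd j φ) x‖₊ : ℝ≥0∞) with hC2_def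
    have hC2top : C2 ≠ ⊤ :=
      ((contDiff_pd j (contDiff_pd j hφ)).continuous.integrable_of_hasCompactSupport
        (hcs_pd j (hcs_pd j hK))).2.ne
    have hF1 : ∀ t : ℝ, (‖fourierT φ (t • ξ)‖₊ : ℝ≥0∞) ≤ C1 := fun t => by
      rw [fourierT_eq]; exact nnorm_four_le hφ hK _
    have hF2 : ∀ t : ℝ, t ≤ -T →
        (‖fourierT φ (t • ξ)‖₊ : ℝ≥0∞) ≤ ENNReal.ofReal (((a * |t|) ^ 2)⁻¹) * C2 := by
      intro t ht
      have ht0 : t < 0 := lt_of_le_of_lt ht (by linarith)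
      have hat : 0 < a * |t| := mul_pos ha (abs_pos.2 ht0.ne)
      have h3 : ENNReal.ofReal ((a * |t|) ^ 2) * (‖fourierT φ (t • ξ)‖₊ : ℝ≥0∞) ≤ C2 := by
        rw [fourierT_eq]
        have hco : (2 * π * |(WithLp.toLp 2 (t • ξ) : V n) j|) = a * |t| := by
          have : (WithLp.toLp 2 (t • ξ) : V n) j = t * ξ j := rfl
          rw [this, abs_mul, ha_def]; ring
        rw [← hco, norm_four_deriv2 j hφ hK _]
        exact nnorm_four_le (contDiff_pd j (contDiff_pd j hφ)) (hcs_pd j (hcs_pd j hK)) _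
      have hX0 : ENNReal.ofReal ((a * |t|) ^ 2) ≠ 0 :=
        (ENNReal.ofReal_pos.mpr (by positivity)).ne'
      calc (‖fourierT φ (t • ξ)‖₊ : ℝ≥0∞)
          = (ENNReal.ofReal ((a * |t|) ^ 2))⁻¹ *
            (ENNReal.ofReal ((a * |t|) ^ 2) * (‖fourierT φ (t • ξ)‖₊ : ℝ≥0∞)) := by
            rw [← mul_assoc, ENNReal.inv_mul_cancel hX0 ENNReal.ofReal_ne_top, one_mul]
        _ ≤ (ENNReal.ofReal ((a * |t|) ^ 2))⁻¹ * C2 := mul_le_mul_right h3 _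
        _ = ENNReal.ofReal (((a * |t|) ^ 2)⁻¹) * C2 := by
            rw [ENNReal.ofReal_inv_of_pos (by positivity)]
    have hsplit : Iio (0 : ℝ) = Iic (-T) ∪ Ioo (-T) 0 := by
      ext t
      simp only [mem_Iio, mem_union, mem_Iic, mem_Ioo]
      constructor
      · intro h
        rcases le_or_gt t (-T) with h' | h'
        · exact Or.inl h'
        · exact Or.inr ⟨h', h⟩
      · rintro (h | ⟨h1, h2⟩) <;> linarith
    rw [hsplit, lintegral_union measurableSet_Ioo
      (by rw [Set.disjoint_left]; intro t h1 h2; exact absurd h2.1 (not_lt.2 h1))]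
    have piece2 : ∫⁻ t in Ioo (-T) 0, (‖fourierT φ (t • ξ)‖₊ : ℝ≥0∞) ≤ C1 * ENNReal.ofReal T :=
      calc ∫⁻ t in Ioo (-T) 0, (‖fourierT φ (t • ξ)‖₊ : ℝ≥0∞)
          ≤ ∫⁻ _t in Ioo (-T) 0, C1 := lintegral_mono fun t => hF1 t
        _ = C1 * volume (Ioo (-T) 0) := setLIntegral_const _ _
        _ = C1 * ENNReal.ofReal T := by rw [Real.volume_Ioo]; norm_num
    have hpre : (fun t : ℝ => -t) ⁻¹' (Iic (-T)) = Ici T := by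
      ext t
      simp only [mem_preimage, mem_Iic, mem_Ici]
      constructor <;> intro <;> linarith
    have hbase : IntegrableOn (fun t : ℝ => t ^ (-2 : ℝ)) (Ioi T) :=
      integrableOn_Ioi_rpow_of_lt (by norm_num) hT
    have heq : ∀ t ∈ Ioi T, ((a * |t|) ^ 2)⁻¹ = (a ^ 2)⁻¹ * t ^ (-2 : ℝ) := by
      intro t ht
      have ht0 : 0 < t := lt_trans hT ht
      rw [abs_of_pos ht0, mul_pow, mul_inv, Real.rpow_neg ht0.le, Real.rpow_two]
    have hint : IntegrableOn (fun t : ℝ => ((a * |t|) ^ 2)⁻¹) (Ioi T) :=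
      IntegrableOn.congr_fun (hbase.const_mul ((a ^ 2)⁻¹)) (fun t ht => (heq t ht).symm)
        measurableSet_Ioi
    have hKval : ∫⁻ t in Iic (-T), ENNReal.ofReal (((a * |t|) ^ 2)⁻¹)
        = ENNReal.ofReal ((a ^ 2)⁻¹ * T⁻¹) := by
      rw [← (Measure.measurePreserving_neg (volume : Measure ℝ)).setLIntegral_comp_preimage_emb
        (Homeomorph.neg ℝ).measurableEmbedding
        (fun t => ENNReal.ofReal (((a * |t|) ^ 2)⁻¹)) (Iic (-T)), hpre]
      simp only [abs_neg]
      have hIci : (∫⁻ t in Ici T, ENNReal.ofReal (((a * |t|) ^ 2)⁻¹))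
          = ∫⁻ t in Ioi T, ENNReal.ofReal (((a * |t|) ^ 2)⁻¹) :=
        (setLIntegral_congr Ioi_ae_eq_Ici).symm
      rw [hIci, ← ofReal_integral_eq_lintegral_ofReal hint (ae_of_all _ fun t => by positivity)]
      congr 1
      rw [setIntegral_congr_fun measurableSet_Ioi heq, integral_const_mul,
        integral_Ioi_rpow_of_lt (by norm_num) hT]
      norm_num [Real.rpow_neg_one]
    have piece1 : ∫⁻ t in Iic (-T), (‖fourierT φ (t • ξ)‖₊ : ℝ≥0∞)
        ≤ ENNReal.ofReal ((a ^ 2)⁻¹ * T⁻¹) * C2 :=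
      calc ∫⁻ t in Iic (-T), (‖fourierT φ (t • ξ)‖₊ : ℝ≥0∞)
          ≤ ∫⁻ t in Iic (-T), ENNReal.ofReal (((a * |t|) ^ 2)⁻¹) * C2 :=
            setLIntegral_mono' measurableSet_Iic fun t ht => hF2 t ht
        _ = (∫⁻ t in Iic (-T), ENNReal.ofReal (((a * |t|) ^ 2)⁻¹)) * C2 :=
            lintegral_mul_const' C2 _ hC2top
        _ = ENNReal.ofReal ((a ^ 2)⁻¹ * T⁻¹) * C2 := by rw [hKval]
    have hval1 : a * ((a ^ 2)⁻¹ * T⁻¹) = ρ := by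
      rw [hT_def, inv_inv]
      field_simp
    have hval2 : a * T = ρ⁻¹ := by
      rw [hT_def, mul_inv]
      field_simp
    have e1 : ENNReal.ofReal ρ = ENNReal.ofReal a * ENNReal.ofReal ((a ^ 2)⁻¹ * T⁻¹) := by
      rw [← ENNReal.ofReal_mul ha.le, hval1]
    have e2 : ENNReal.ofReal ρ⁻¹ = ENNReal.ofReal a * ENNReal.ofReal T := by
      rw [← ENNReal.ofReal_mul ha.le, hval2]
    calc ENNReal.ofReal a *
        ((∫⁻ t in Iic (-T), (‖fourierT φ (t • ξ)‖₊ : ℝ≥0∞)) +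
          ∫⁻ t in Ioo (-T) 0, (‖fourierT φ (t • ξ)‖₊ : ℝ≥0∞))
        ≤ ENNReal.ofReal a *
          (ENNReal.ofReal ((a ^ 2)⁻¹ * T⁻¹) * C2 + C1 * ENNReal.ofReal T) :=
          mul_le_mul_right (add_le_add piece1 piece2) _
      _ = ENNReal.ofReal ρ⁻¹ * C1 + ENNReal.ofReal ρ * C2 := by
          rw [e1, e2]; ring
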